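/- Let g = λx:α.λy:α. f(Z(s₁,…,sₘ)) be a Λ-tight generalization of s = λx:α.λy:α. f(x) and t = λx:α.λy:α. f(y), let (σ₁,σ₂) ∈ GS_gnd(s,t,g) with Zσ₁ = r₁ and Zσ₂ = r₂, and let Y be a fresh free variable not in g. Then the (g,Λ)-pseudo-pattern g' = G_Λ(g,Z,Y,σ₁,σ₂) = g{Z ↦ λb₁…bₘ. Y(r₁(b₁,…,bₘ), r₂(b₁,…,bₘ))} is a Λ-generalization of s and t; moreover, writing σ₁ = σ₁' ∪ {Z ↦ r₁} and σ₂ = σ₂' ∪ {Z ↦ r₂} with Z not in the domains of σ₁', σ₂', the pair (σ₁' ∪ {Y ↦ λw₁λw₂. w₁}, σ₂' ∪ {Y ↦ λw₁λw₂. w₂}) is in GS_gnd(s,t,g'). -/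

import Mathlib

/-!
Anti-unification over the simply-typed lambda calculus (Cerna & Buran).

We fix one base type `α` (`Ty.base`) and a signature that contains, for every
simple type `τ`, constants `Tm.const n τ` (so in particular a constant
`f : α → α`, namely `fC = Tm.const 0 (α → α)`).  Terms use de Bruijn indices
for bound variables (so `=_α` is definitional) and named, type-annotated free
variables.  Substitutions are type-preserving finite maps from free variables
to (locally closed) terms; since the terms in their range are locally closed,
application of a substitution is automatically capture-avoiding.
-/

namespace AU

inductive Ty : Type where
  | base : Ty
  | arr : Ty → Ty → Ty
deriving DecidableEq

inductive Tm : Type where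
  | bvar : ℕ → Tm
  | fvar : ℕ → Ty → Tm
  | const : ℕ → Ty → Tm
  | lam : Ty → Tm → Tm
  | app : Tm → Tm → Tm
deriving DecidableEq

/-- `mkArrow [γ₁,…,γₘ] ρ = γ₁ → ⋯ → γₘ → ρ`. -/
def mkArrow : List Ty → Ty → Ty
  | [], ρ => ρ
  | τ :: rest, ρ => Ty.arr τ (mkArrow rest ρ)

/-- Shift de Bruijn indices `≥ c` up by `d`. -/
def shift (d : ℕ) : ℕ → Tm → Tm
  | c, Tm.bvar i => if i < c then Tm.bvar i else Tm.bvar (i + d)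
  | _, Tm.fvar n τ => Tm.fvar n τ
  | _, Tm.const n τ => Tm.const n τ
  | c, Tm.lam τ t => Tm.lam τ (shift d (c + 1) t)
  | c, Tm.app t u => Tm.app (shift d c t) (shift d c u)

/-- Substitute `u` for the bound variable `k` in `t` (for β-reduction). -/
def bsubst : Tm → ℕ → Tm → Tm
  | Tm.bvar i, k, u => if i = k then u else if k < i then Tm.bvar (i - 1) else Tm.bvar i
  | Tm.fvar n τ, _, _ => Tm.fvar n τ
  | Tm.const n τ, _, _ => Tm.const n τ
  | Tm.lam τ t, k, u => Tm.lam τ (bsubst t (k + 1) (shift 1 0 u))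
  | Tm.app a b, k, u => Tm.app (bsubst a k u) (bsubst b k u)

/-- Simple typing. Free variables and constants carry their type. -/
inductive HasType : List Ty → Tm → Ty → Prop where
  | bvar {Γ i τ} : Γ[i]? = some τ → HasType Γ (Tm.bvar i) τ
  | fvar {Γ n τ} : HasType Γ (Tm.fvar n τ) τ
  | const {Γ n τ} : HasType Γ (Tm.const n τ) τ
  | lam {Γ τ ρ t} : HasType (τ :: Γ) t ρ → HasType Γ (Tm.lam τ t) (Ty.arr τ ρ)
  | app {Γ t u τ ρ} : HasType Γ t (Ty.arr τ ρ) → HasType Γ u τ → HasType Γ (Tm.app t u) ρ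

/-- `=_{αβη}`: equality modulo α (definitional), β and η. -/
inductive AbeEq : Tm → Tm → Prop where
  | refl (t) : AbeEq t t
  | symm {t u} : AbeEq t u → AbeEq u t
  | trans {t u v} : AbeEq t u → AbeEq u v → AbeEq t v
  | beta (τ t u) : AbeEq (Tm.app (Tm.lam τ t) u) (bsubst t 0 u)
  | eta (τ t) : AbeEq (Tm.lam τ (Tm.app (shift 1 0 t) (Tm.bvar 0))) t
  | lam {τ t u} : AbeEq t u → AbeEq (Tm.lam τ t) (Tm.lam τ u)
  | app {t t' u u'} : AbeEq t t' → AbeEq u u' → AbeEq (Tm.app t u) (Tm.app t' u')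

/-- One step of η-reduction (congruent closure). -/
inductive EtaStep : Tm → Tm → Prop where
  | eta (τ t) : EtaStep (Tm.lam τ (Tm.app (shift 1 0 t) (Tm.bvar 0))) t
  | lam {τ t u} : EtaStep t u → EtaStep (Tm.lam τ t) (Tm.lam τ u)
  | appL {t t' u} : EtaStep t t' → EtaStep (Tm.app t u) (Tm.app t' u)
  | appR {t u u'} : EtaStep u u' → EtaStep (Tm.app t u) (Tm.app t u')

def EtaRed : Tm → Tm → Prop := Relation.ReflTransGen EtaStep
def EtaNormal (t : Tm) : Prop := ∀ u, ¬ EtaStep t u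
/-- `IsEtaNF t t'` : `t'` is the η-normal form `t↓_η` of `t`. -/
def IsEtaNF (t t' : Tm) : Prop := EtaRed t t' ∧ EtaNormal t'

inductive BetaStep : Tm → Tm → Prop where
  | beta (τ t u) : BetaStep (Tm.app (Tm.lam τ t) u) (bsubst t 0 u)
  | lam {τ t u} : BetaStep t u → BetaStep (Tm.lam τ t) (Tm.lam τ u)
  | appL {t t' u} : BetaStep t t' → BetaStep (Tm.app t u) (Tm.app t' u)
  | appR {t u u'} : BetaStep u u' → BetaStep (Tm.app t u) (Tm.app t u')

def BetaEtaStep (t u : Tm) : Prop := BetaStep t u ∨ EtaStep t u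
def BetaEtaRed : Tm → Tm → Prop := Relation.ReflTransGen BetaEtaStep
def BetaEtaNormal (t : Tm) : Prop := ∀ u, ¬ BetaEtaStep t u

/-- The head of a term: `head (λx.t) = λx.`, `head (h(s₁,…,sₘ)) = h`. -/
inductive Head : Type where
  | lam : Ty → Head
  | bvar : ℕ → Head
  | fvar : ℕ → Ty → Head
  | const : ℕ → Ty → Head
deriving DecidableEq

def headOf : Tm → Head
  | Tm.bvar i => Head.bvar i
  | Tm.fvar n τ => Head.fvar n τ
  | Tm.const n τ => Head.const n τ
  | Tm.lam τ _ => Head.lam τ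
  | Tm.app t _ => headOf t

/-- Number of occurrences of the free variable `(n : τ)` in a term. -/
def occFV (n : ℕ) (τ : Ty) : Tm → ℕ
  | Tm.bvar _ => 0
  | Tm.fvar m ρ => if m = n ∧ ρ = τ then 1 else 0
  | Tm.const _ _ => 0
  | Tm.lam _ t => occFV n τ t
  | Tm.app a b => occFV n τ a + occFV n τ b

/-- A term containing no free variables (ground). -/
def NoFV : Tm → Prop
  | Tm.bvar _ => True
  | Tm.fvar _ _ => False
  | Tm.const _ _ => True
  | Tm.lam _ t => NoFV t
  | Tm.app a b => NoFV a ∧ NoFV b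

/-- A strict upper bound on the names of free variables occurring in a term. -/
def fvBound : Tm → ℕ
  | Tm.bvar _ => 0
  | Tm.fvar n _ => n + 1
  | Tm.const _ _ => 0
  | Tm.lam _ t => fvBound t
  | Tm.app a b => max (fvBound a) (fvBound b)

/-- Apply a (total) map from free variables to terms. -/
def applyMap (σ : ℕ → Ty → Tm) : Tm → Tm
  | Tm.bvar i => Tm.bvar i
  | Tm.fvar n τ => σ n τ
  | Tm.const n τ => Tm.const n τ
  | Tm.lam τ t => Tm.lam τ (applyMap σ t)
  | Tm.app a b => Tm.app (applyMap σ a) (applyMap σ b)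

/-- A substitution: a type-preserving map from free variables to locally
closed terms, equal to the identity outside a finite domain.  Since the terms
in its range are locally closed, application is capture-avoiding. -/
structure Subst where
  map : ℕ → Ty → Tm
  wt : ∀ n τ, HasType [] (map n τ) τ
  fin : {p : ℕ × Ty | map p.1 p.2 ≠ Tm.fvar p.1 p.2}.Finite

def Subst.apply (σ : Subst) (t : Tm) : Tm := applyMap σ.map t

def idSubst : Subst where
  map := fun n τ => Tm.fvar n τ
  wt := fun _ _ => HasType.fvar
  fin := by
    have h : {p : ℕ × Ty | Tm.fvar p.1 p.2 ≠ Tm.fvar p.1 p.2} = ∅ := by ext p; simp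
    rw [h]; exact Set.finite_empty

def Subst.update (σ : Subst) (n : ℕ) (τ : Ty) (u : Tm) (hu : HasType [] u τ) : Subst where
  map := fun m ρ => if m = n ∧ ρ = τ then u else σ.map m ρ
  wt := by
    intro m ρ
    try dsimp only
    by_cases h : m = n ∧ ρ = τ
    · rw [if_pos h]
      obtain ⟨-, rfl⟩ := h
      exact hu
    · rw [if_neg h]; exact σ.wt m ρ
  fin := by
    apply (σ.fin.insert (n, τ)).subset
    intro p hp
    simp only [Set.mem_setOf_eq] at hp
    by_cases h : p = (n, τ)
    · exact h ▸ Set.mem_insert _ _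
    · have hne : ¬ (p.1 = n ∧ p.2 = τ) := by
        intro hc
        apply h
        cases p
        exact Prod.ext hc.1 hc.2
      rw [if_neg hne] at hp
      exact Set.mem_insert_of_mem _ hp

/-- A ground substitution: terms in its range contain no free variables. -/
def Subst.Ground (σ : Subst) : Prop :=
  ∀ n τ, σ.map n τ ≠ Tm.fvar n τ → NoFV (σ.map n τ)

/-- The base type `α`, the types `α → α` and `α → α → α`. -/
def tyFF : Ty := Ty.arr Ty.base Ty.base
def ty2 : Ty := Ty.arr Ty.base (Ty.arr Ty.base Ty.base)

/-- The constant `f : α → α`. -/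
def fC : Tm := Tm.const 0 tyFF

/-- `s = λx:α.λy:α. f(x)`. -/
def sTerm : Tm := Tm.lam Ty.base (Tm.lam Ty.base (Tm.app fC (Tm.bvar 1)))
/-- `t = λx:α.λy:α. f(y)`. -/
def tTerm : Tm := Tm.lam Ty.base (Tm.lam Ty.base (Tm.app fC (Tm.bvar 0)))

/-- `appList h [s₁,…,sₘ] = h s₁ … sₘ`. -/
def appList (h : Tm) (args : List Tm) : Tm := args.foldl Tm.app h
/-- `mkLams [τ₁,…,τₘ] t = λb₁:τ₁…λbₘ:τₘ. t`. -/
def mkLams (τs : List Ty) (t : Tm) : Tm := τs.foldr Tm.lam t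
/-- `appBVars h m = h bₘ₋₁ … b₀` : apply `h` to the `m` innermost binders. -/
def appBVars (h : Tm) (m : ℕ) : Tm :=
  ((List.range m).reverse).foldl (fun acc i => Tm.app acc (Tm.bvar i)) h

inductive SubtermOf : Tm → Tm → Prop where
  | refl (t) : SubtermOf t t
  | lam {u τ t} : SubtermOf u t → SubtermOf u (Tm.lam τ t)
  | appL {u t v} : SubtermOf u t → SubtermOf u (Tm.app t v)
  | appR {u t v} : SubtermOf u v → SubtermOf u (Tm.app t v)

/-- The η-normal form of an argument of a free variable in a superpattern is a
bound variable or has a free-variable head. -/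
def ArgOK (s : Tm) : Prop :=
  ∀ s', IsEtaNF s s' →
    (∃ i, s' = Tm.bvar i) ∨ (∃ n ρ, headOf s' = Head.fvar n ρ)

/-- Superpatterns (Definition `superpattern`): for every subterm occurrence
`X(s₁,…,sₘ)` headed by a free variable, every argument is (in η-normal form)
a bound variable or free-variable-headed, and the bound-variable arguments
are pairwise distinct. -/
def IsSuperpattern (t : Tm) : Prop :=
  ∀ u, SubtermOf u t → ∀ X τ args, u = appList (Tm.fvar X τ) args →
    (∀ s ∈ args, ArgOK s) ∧
    (∀ (i j : ℕ) (hi : i < args.length) (hj : j < args.length) (si' sj' : Tm),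
       IsEtaNF (args[i]'hi) si' → IsEtaNF (args[j]'hj) sj' →
       (∃ a, si' = Tm.bvar a) → si' = sj' → i = j)

/-- The class `Λ` of all (simply-typed) λ-terms. -/
def ΛAll : Tm → Prop := fun _ => True

/-- `g` is an `L`-generalization of `s = λx,y.f(x)` and `t = λx,y.f(y)`. -/
def Gen (L : Tm → Prop) (g : Tm) : Prop :=
  L g ∧ HasType [] g ty2 ∧
  ∃ σ₁ σ₂ : Subst, AbeEq (σ₁.apply g) sTerm ∧ AbeEq (σ₂.apply g) tTerm

/-- The instantiation quasi-order `g ≤ g'` : `gσ =_{αβη} g'` for some `σ`.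
(The same relation defines `≤_Λ` and `≤_{Λ_sp}`.) -/
def LeGen (g g' : Tm) : Prop := ∃ σ : Subst, AbeEq (σ.apply g) g'

/-- `C` is a complete set of `L`-generalizations of `s` and `t`. -/
def CompleteSet (L : Tm → Prop) (C : Set Tm) : Prop :=
  (∀ g ∈ C, Gen L g) ∧ ∀ g', Gen L g' → ∃ g ∈ C, LeGen g' g

def zVar : ℕ := 0

/-- The pattern generalization `λx:α.λy:α. f(Z(x,y))` with `Z : α → α → α`. -/
def patternG : Tm :=
  Tm.lam Ty.base (Tm.lam Ty.base
    (Tm.app fC (Tm.app (Tm.app (Tm.fvar zVar ty2) (Tm.bvar 1)) (Tm.bvar 0))))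

/-- `L`-pattern-derived generalizations: `λx.λy.f(Z(x,y)) ≤_L g`. -/
def PatternDerived (L : Tm → Prop) (g : Tm) : Prop := Gen L g ∧ LeGen patternG g

/-- `(σ₁,σ₂) ∈ GS_gnd(s,t,g)` : generalizing substitutions with ground ranges. -/
def GSgnd (g : Tm) (σ₁ σ₂ : Subst) : Prop :=
  AbeEq (σ₁.apply g) sTerm ∧ AbeEq (σ₂.apply g) tTerm ∧ σ₁.Ground ∧ σ₂.Ground

/-- `subst1 n τ u` is the substitution `{(n:τ) ↦ u}` (as a syntactic map). -/
def subst1 (n : ℕ) (τ : Ty) (u : Tm) : Tm → Tm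
  | Tm.bvar i => Tm.bvar i
  | Tm.fvar m ρ => if m = n ∧ ρ = τ then u else Tm.fvar m ρ
  | Tm.const m ρ => Tm.const m ρ
  | Tm.lam ρ t => Tm.lam ρ (subst1 n τ u t)
  | Tm.app a b => Tm.app (subst1 n τ u a) (subst1 n τ u b)

/-- The two conditions of Definition `patternDerived` (`L`-tightness): no free
variable `W` of `g` can be eliminated by a projection, nor by substituting its
image under a pair of ground generalizing substitutions, while remaining a
generalization. -/
def TightCond (L : Tm → Prop) (g : Tm) : Prop :=
  ∀ W τ, occFV W τ g ≠ 0 →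
    (∀ (γs : List Ty) (i : ℕ) (hi : i < γs.length),
        τ = mkArrow γs (γs[i]'hi) →
        ¬ Gen L (subst1 W τ (mkLams γs (Tm.bvar (γs.length - 1 - i))) g)) ∧
    (∀ σ₁ σ₂ : Subst, GSgnd g σ₁ σ₂ →
        ¬ Gen L (subst1 W τ (σ₁.map W τ) g) ∧ ¬ Gen L (subst1 W τ (σ₂.map W τ) g))

/-- `L`-tight generalizations. -/
def IsTight (L : Tm → Prop) (g : Tm) : Prop := PatternDerived L g ∧ TightCond L g

/-- The projections `λw₁.λw₂.w₁` and `λw₁.λw₂.w₂` of type `α → α → α`. -/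
def proj1 : Tm := Tm.lam Ty.base (Tm.lam Ty.base (Tm.bvar 1))
def proj2 : Tm := Tm.lam Ty.base (Tm.lam Ty.base (Tm.bvar 0))

theorem proj1_wt : HasType [] proj1 ty2 :=
  HasType.lam (HasType.lam (HasType.bvar rfl))
theorem proj2_wt : HasType [] proj2 ty2 :=
  HasType.lam (HasType.lam (HasType.bvar rfl))

/-- `λb₁…bₘ. Y (r₁ b₁ … bₘ) (r₂ b₁ … bₘ)` with `Y : α → α → α`. -/
def pseudoBody (Y : ℕ) (δs : List Ty) (r₁ r₂ : Tm) : Tm :=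
  mkLams δs (Tm.app (Tm.app (Tm.fvar Y ty2) (appBVars (shift δs.length 0 r₁) δs.length))
                    (appBVars (shift δs.length 0 r₂) δs.length))

/-- The shape `λx:α.λy:α. f(Z(s₁,…,sₘ))` of a `Λ`-tight generalization, where
`Z : δ₁ → ⋯ → δₘ → α`. -/
def tightForm (z : ℕ) (δs : List Ty) (args : List Tm) : Tm :=
  Tm.lam Ty.base (Tm.lam Ty.base
    (Tm.app fC (appList (Tm.fvar z (mkArrow δs Ty.base)) args)))

/-- The argument of `f` in the `(g,Λ)`-pseudo-pattern `G_Λ(g,Z,Y,σ₁,σ₂)`. -/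
def pseudoArg (z Y : ℕ) (δs : List Ty) (args : List Tm) (r₁ r₂ : Tm) : Tm :=
  subst1 z (mkArrow δs Ty.base) (pseudoBody Y δs r₁ r₂)
    (appList (Tm.fvar z (mkArrow δs Ty.base)) args)

/-- The `(g,Λ)`-pseudo-pattern `G_Λ(g,Z,Y,σ₁,σ₂) = g{Z ↦ λb̄. Y(r₁ b̄, r₂ b̄)}`. -/
def pseudoPat (z Y : ℕ) (δs : List Ty) (args : List Tm) (r₁ r₂ : Tm) : Tm :=
  Tm.lam Ty.base (Tm.lam Ty.base (Tm.app fC (pseudoArg z Y δs args r₁ r₂)))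

/-- Subterm at a (binary-tree) position. -/
def subAt : Tm → List ℕ → Option Tm
  | t, [] => some t
  | Tm.lam _ t, 0 :: p => subAt t p
  | Tm.app a _, 0 :: p => subAt a p
  | Tm.app _ b, 1 :: p => subAt b p
  | _, _ => none

/-- Replace the subterm at a position (identity on invalid positions). -/
def replaceAt : Tm → List ℕ → Tm → Tm
  | _, [], u => u
  | Tm.lam τ t, 0 :: p, u => Tm.lam τ (replaceAt t p u)
  | Tm.app a b, 0 :: p, u => Tm.app (replaceAt a p u) b
  | Tm.app a b, 1 :: p, u => Tm.app a (replaceAt b p u)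
  | t, _, _ => t

def inferTy : List Ty → Tm → Option Ty
  | Γ, Tm.bvar i => Γ[i]?
  | _, Tm.fvar _ τ => some τ
  | _, Tm.const _ τ => some τ
  | Γ, Tm.lam τ t => (inferTy (τ :: Γ) t).map (Ty.arr τ)
  | Γ, Tm.app a b =>
      match inferTy Γ a, inferTy Γ b with
      | some (Ty.arr τ ρ), some τ' => if τ = τ' then some ρ else none
      | _, _ => none

/-- `(Σ,w̄)`-representative positions: the η-normal form of the subterm is
headed by a constant of `Σ` or an abstraction. -/
def RepPos (r : Tm) (q : List ℕ) : Prop :=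
  ∃ u u', subAt r q = some u ∧ IsEtaNF u u' ∧
    ((∃ τ, headOf u' = Head.lam τ) ∨ (∃ n τ, headOf u' = Head.const n τ))

/-- `(Σ,w̄)`-maximal positions: representative, with no representative
position strictly above. -/
def MaxPos (r : Tm) (q : List ℕ) : Prop :=
  RepPos r q ∧ ∀ p, p <+: q → p ≠ q → ¬ RepPos r p

/-- The term `H(x,y)` replacing a maximal subterm of `r` during lifting, where
`H : α → α → ν_q` and `ν_q` is the type of the subterm of `r` at `q`. -/
def liftReplacement (r : Tm) (q : List ℕ) (H : ℕ) : Tm :=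
  Tm.app (Tm.app (Tm.fvar H (Ty.arr Ty.base (Ty.arr Ty.base
    ((inferTy [Ty.base, Ty.base] ((subAt r q).getD r)).getD Ty.base)))) (Tm.bvar 1)) (Tm.bvar 0)

/-- `LiftOf avoid r r'` : `r'` is obtained from `r` (the argument of `f`,
under the binders `x, y`) by replacing the subterm at each `(Σ,w̄)`-maximal
position by `H_q(x,y)` for pairwise distinct fresh free variables `H_q`
(all names `≥ avoid`). -/
def LiftOf (avoid : ℕ) (r r' : Tm) : Prop :=
  ∃ (qs : List (List ℕ)) (names : List ℕ),
    qs.Nodup ∧ names.Nodup ∧ names.length = qs.length ∧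
    (∀ n ∈ names, avoid ≤ n) ∧
    (∀ q, q ∈ qs ↔ MaxPos r q) ∧
    r' = (qs.zip names).foldl (fun acc p => replaceAt acc p.1 (liftReplacement r p.1 p.2)) r

/-- `λw₁.λw₂. Y(Y(w₁,w₂),Y(w₁,w₂))`. -/
def dupTm (Y : ℕ) : Tm :=
  Tm.lam Ty.base (Tm.lam Ty.base
    (Tm.app (Tm.app (Tm.fvar Y ty2)
              (Tm.app (Tm.app (Tm.fvar Y ty2) (Tm.bvar 1)) (Tm.bvar 0)))
            (Tm.app (Tm.app (Tm.fvar Y ty2) (Tm.bvar 1)) (Tm.bvar 0))))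

/-- The singleton substitution `{(n:τ) ↦ u}`. -/
def single (n : ℕ) (τ : Ty) (u : Tm) (hu : HasType [] u τ) : Subst :=
  idSubst.update n τ u hu

/-- `λx.λy. f(R(x,y))` (with `R` the free variable `zVar : α → α → α`). -/
def pat1 : Tm := patternG

/-- `λx.λy. f(R(R(x,y),R(x,y)))`. -/
def pat2 : Tm :=
  Tm.lam Ty.base (Tm.lam Ty.base (Tm.app fC
    (Tm.app (Tm.app (Tm.fvar zVar ty2)
              (Tm.app (Tm.app (Tm.fvar zVar ty2) (Tm.bvar 1)) (Tm.bvar 0)))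
            (Tm.app (Tm.app (Tm.fvar zVar ty2) (Tm.bvar 1)) (Tm.bvar 0)))))

/-! ### Auxiliary lemmas -/

lemma shift_closed {Γ : List Ty} {t : Tm} {τ : Ty} (h : HasType Γ t τ) :
    ∀ d c, Γ.length ≤ c → shift d c t = t := by
  induction h with
  | @bvar Γ i τ h =>
      intro d c hc
      have hi : i < Γ.length := (List.getElem?_eq_some_iff.mp h).1
      simp [shift, Nat.lt_of_lt_of_le hi hc]
  | fvar => intro d c _; rfl
  | const => intro d c _; rfl
  | @lam Γ τ ρ t _ ih =>
      intro d c hc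
      simp [shift, ih d (c+1) (by simpa using Nat.succ_le_succ hc)]
  | @app Γ t u τ ρ _ _ iht ihu =>
      intro d c hc
      simp [shift, iht d c hc, ihu d c hc]

lemma weaken {Γ : List Ty} {t : Tm} {τ : Ty} (h : HasType Γ t τ) (Δ : List Ty) :
    HasType (Γ ++ Δ) t τ := by
  induction h generalizing Δ with
  | @bvar Γ i τ h =>
      exact HasType.bvar (by
        have hi : i < Γ.length := (List.getElem?_eq_some_iff.mp h).1
        rw [List.getElem?_append, if_pos hi]; exact h)
  | fvar => exact HasType.fvar
  | const => exact HasType.const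
  | lam _ ih => exact HasType.lam (ih Δ)
  | app _ _ iht ihu => exact HasType.app (iht Δ) (ihu Δ)

lemma weaken0 {t : Tm} {τ : Ty} (h : HasType [] t τ) (Γ : List Ty) :
    HasType Γ t τ := by
  simpa using weaken h Γ

lemma subst1_wt {Γ : List Ty} {t : Tm} {ρ : Ty} (h : HasType Γ t ρ)
    {n : ℕ} {τ : Ty} {u : Tm} (hu : HasType [] u τ) :
    HasType Γ (subst1 n τ u t) ρ := by
  induction h with
  | bvar h => exact HasType.bvar h
  | @fvar Γ m ρ =>
      by_cases hc : m = n ∧ ρ = τ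
      · obtain ⟨rfl, rfl⟩ := hc
        simpa [subst1] using weaken0 hu Γ
      · simpa [subst1, hc] using HasType.fvar
  | const => exact HasType.const
  | lam _ ih => exact HasType.lam ih
  | app _ _ iht ihu => exact HasType.app iht ihu

lemma mkLams_wt {δs : List Ty} {Γ : List Ty} {t : Tm} {ρ : Ty}
    (h : HasType (δs.reverse ++ Γ) t ρ) :
    HasType Γ (mkLams δs t) (mkArrow δs ρ) := by
  induction δs generalizing Γ with
  | nil => simpa [mkLams, mkArrow] using h
  | cons τ rest ih =>
      refine HasType.lam (ih ?_)
      simpa using h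

lemma appBVars_succ (h : Tm) (n : ℕ) :
    appBVars h (n+1) = appBVars (Tm.app h (Tm.bvar n)) n := by
  simp [appBVars, List.range_succ]

lemma appBVars_wt {δs : List Ty} {Δ : List Ty} {h : Tm} {ρ : Ty}
    (hh : HasType (δs.reverse ++ Δ) h (mkArrow δs ρ)) :
    HasType (δs.reverse ++ Δ) (appBVars h δs.length) ρ := by
  induction δs generalizing Δ h with
  | nil => simpa [appBVars, mkArrow] using hh
  | cons τ rest ih =>
      have hlen : (rest.reverse).length = rest.length := by simp
      have hb : HasType ((τ :: rest).reverse ++ Δ) (Tm.bvar rest.length) τ := by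
        refine HasType.bvar ?_
        have : (τ :: rest).reverse ++ Δ = rest.reverse ++ ([τ] ++ Δ) := by simp
        rw [this, List.getElem?_append_right (by simp)]
        simp
      have happ : HasType ((τ :: rest).reverse ++ Δ)
          (Tm.app h (Tm.bvar rest.length)) (mkArrow rest ρ) :=
        HasType.app (by simpa [mkArrow] using hh) hb
      have := ih (Δ := [τ] ++ Δ) (h := Tm.app h (Tm.bvar rest.length))
        (by simpa using happ)
      rw [List.length_cons, appBVars_succ]
      simpa using this

lemma shift_shift (d d' : ℕ) : ∀ (t : Tm) (c : ℕ),
    shift d c (shift d' c t) = shift (d + d') c t := by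
  intro t
  induction t with
  | bvar i =>
      intro c
      by_cases h : i < c
      · simp [shift, h]
      · simp [shift, h, Nat.add_assoc, Nat.add_comm d' d]
        intro hc
        exact absurd (Nat.lt_of_le_of_lt (Nat.le_add_right i d') hc) h
  | fvar n τ => intro c; rfl
  | const n τ => intro c; rfl
  | lam τ t ih => intro c; simp [shift, ih]
  | app a b iha ihb => intro c; simp [shift, iha, ihb]

lemma shift_zero : ∀ (t : Tm) (c : ℕ), shift 0 c t = t := by
  intro t
  induction t with
  | bvar i => intro c; by_cases h : i < c <;> simp [shift, h]
  | fvar n τ => intro c; rfl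
  | const n τ => intro c; rfl
  | lam τ t ih => intro c; simp [shift, ih]
  | app a b iha ihb => intro c; simp [shift, iha, ihb]

lemma bsubst_shift : ∀ (t : Tm) (k : ℕ) (u : Tm), bsubst (shift 1 k t) k u = t := by
  intro t
  induction t with
  | bvar i =>
      intro k u
      by_cases h : i < k
      · simp [shift, h, bsubst, Nat.ne_of_lt h, Nat.not_lt.mpr (Nat.le_of_lt h)]
      · have h1 : ¬ (i + 1 = k) := by omega
        have h2 : k < i + 1 := by omega
        simp [shift, h, bsubst, h1, h2]
  | fvar n τ => intro k u; rfl
  | const n τ => intro k u; rfl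
  | lam τ t ih => intro k u; simp [shift, bsubst, ih]
  | app a b iha ihb => intro k u; simp [shift, bsubst, iha, ihb]

lemma applyMap_appBVars (σ : ℕ → Ty → Tm) (h : Tm) (m : ℕ) :
    applyMap σ (appBVars h m) = appBVars (applyMap σ h) m := by
  induction m generalizing h with
  | zero => simp [appBVars]
  | succ n ih => rw [appBVars_succ, appBVars_succ, ih]; rfl

lemma applyMap_mkLams (σ : ℕ → Ty → Tm) (δs : List Ty) (t : Tm) :
    applyMap σ (mkLams δs t) = mkLams δs (applyMap σ t) := by
  induction δs with
  | nil => rfl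
  | cons τ rest ih => simp [mkLams, applyMap] at *; exact ih

lemma abeEq_mkLams {t u : Tm} (h : AbeEq t u) (δs : List Ty) :
    AbeEq (mkLams δs t) (mkLams δs u) := by
  induction δs with
  | nil => exact h
  | cons τ rest ih => exact AbeEq.lam ih

lemma noFV_applyMap (σ : ℕ → Ty → Tm) : ∀ (t : Tm), NoFV t → applyMap σ t = t := by
  intro t
  induction t with
  | bvar i => intro _; rfl
  | fvar n τ => intro h; exact absurd h (by simp [NoFV])
  | const n τ => intro _; rfl
  | lam τ t ih => intro h; simp [applyMap, ih h]
  | app a b iha ihb =>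
      intro h
      simp only [NoFV] at h
      simp [applyMap, iha h.1, ihb h.2]

lemma occFV_appList_head {n : ℕ} {τ : Ty} :
    ∀ (args : List Tm) (h : Tm), occFV n τ (appList h args) = 0 → occFV n τ h = 0 := by
  intro args
  induction args with
  | nil => intro h hh; exact hh
  | cons a as ih =>
      intro h hh
      have := ih (Tm.app h a) hh
      simp only [occFV] at this
      omega

lemma etaMulti : ∀ (δs : List Ty) (h : Tm),
    AbeEq (mkLams δs (appBVars (shift δs.length 0 h) δs.length)) h := by
  intro δs
  induction δs with
  | nil => intro h; simpa [mkLams, appBVars, shift_zero] using AbeEq.refl h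
  | cons τ rest ih =>
      intro h
      set n := rest.length with hn
      have e1 : shift (n + 1) 0 h = shift n 0 (shift 1 0 h) := by
        rw [shift_shift]
      have e2 : Tm.app (shift n 0 (shift 1 0 h)) (Tm.bvar n)
          = shift n 0 (Tm.app (shift 1 0 h) (Tm.bvar 0)) := by
        simp [shift]
      have : mkLams (τ :: rest) (appBVars (shift (τ :: rest).length 0 h) (τ :: rest).length)
          = Tm.lam τ (mkLams rest
              (appBVars (shift n 0 (Tm.app (shift 1 0 h) (Tm.bvar 0))) n)) := by
        simp only [mkLams, List.foldr, List.length_cons, appBVars_succ, ← hn, e1, e2]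
      rw [this]
      exact AbeEq.trans (AbeEq.lam (ih (Tm.app (shift 1 0 h) (Tm.bvar 0)))) (AbeEq.eta τ h)

lemma proj1_beta (A₁ A₂ : Tm) : AbeEq (Tm.app (Tm.app proj1 A₁) A₂) A₁ := by
  have h1 : AbeEq (Tm.app (Tm.app proj1 A₁) A₂)
      (Tm.app (Tm.lam Ty.base (shift 1 0 A₁)) A₂) := by
    have := AbeEq.beta Ty.base (Tm.lam Ty.base (Tm.bvar 1)) A₁
    simp only [bsubst, if_pos rfl] at this
    exact AbeEq.app this (AbeEq.refl A₂)
  have h2 : AbeEq (Tm.app (Tm.lam Ty.base (shift 1 0 A₁)) A₂) A₁ := by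
    have := AbeEq.beta Ty.base (shift 1 0 A₁) A₂
    rwa [bsubst_shift] at this
  exact AbeEq.trans h1 h2

lemma proj2_beta (A₁ A₂ : Tm) : AbeEq (Tm.app (Tm.app proj2 A₁) A₂) A₂ := by
  have h1 : AbeEq (Tm.app (Tm.app proj2 A₁) A₂)
      (Tm.app (Tm.lam Ty.base (Tm.bvar 0)) A₂) := by
    have := AbeEq.beta Ty.base (Tm.lam Ty.base (Tm.bvar 0)) A₁
    simp only [bsubst] at this
    exact AbeEq.app this (AbeEq.refl A₂)
  have h2 : AbeEq (Tm.app (Tm.lam Ty.base (Tm.bvar 0)) A₂) A₂ := by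
    have := AbeEq.beta Ty.base (Tm.bvar 0) A₂
    simpa [bsubst] using this
  exact AbeEq.trans h1 h2

/-- Key substitution-composition lemma. -/
lemma key_subst (θ σ : ℕ → Ty → Tm) (z Y : ℕ) (τz : Ty) (B : Tm)
    (hB : AbeEq (applyMap θ B) (σ z τz))
    (hag : ∀ m ρ, ¬ (m = z ∧ ρ = τz) → ¬ (m = Y ∧ ρ = ty2) → θ m ρ = σ m ρ) :
    ∀ t, occFV Y ty2 t = 0 →
      AbeEq (applyMap θ (subst1 z τz B t)) (applyMap σ t) := by
  intro t
  induction t with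
  | bvar i => intro _; exact AbeEq.refl _
  | fvar m ρ =>
      intro hocc
      by_cases hc : m = z ∧ ρ = τz
      · obtain ⟨rfl, rfl⟩ := hc
        simpa [subst1, applyMap] using hB
      · have hY : ¬ (m = Y ∧ ρ = ty2) := by
          intro hco; simp [occFV, hco] at hocc
        simp only [subst1, if_neg hc, applyMap]
        rw [hag m ρ hc hY]
        exact AbeEq.refl _
  | const n τ => intro _; exact AbeEq.refl _
  | lam τ t ih =>
      intro hocc
      exact AbeEq.lam (ih (by simpa [occFV] using hocc))
  | app a b iha ihb =>
      intro hocc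
      simp only [occFV, Nat.add_eq_zero] at hocc
      exact AbeEq.app (iha hocc.1) (ihb hocc.2)

lemma ground_update (σ : Subst) (hσ : σ.Ground) (z Y : ℕ) (τz : Ty) (p : Tm)
    (hw : HasType [] p ty2) (hp : NoFV p) :
    ((σ.update z τz (Tm.fvar z τz) HasType.fvar).update Y ty2 p hw).Ground := by
  intro n τ hne
  simp only [Subst.update] at hne ⊢
  by_cases h1 : n = Y ∧ τ = ty2
  · rw [if_pos h1]; exact hp
  · rw [if_neg h1] at hne ⊢
    by_cases h2 : n = z ∧ τ = τz
    · rw [if_pos h2] at hne ⊢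
      obtain ⟨rfl, rfl⟩ := h2
      exact absurd rfl hne
    · rw [if_neg h2] at hne ⊢
      exact hσ n τ hne

/-- Lemma pseudopattern: for a `Λ`-tight generalization
`g = λx.λy.f(Z(s₁,…,sₘ))` of `s` and `t`, `(σ₁,σ₂) ∈ GS_gnd(s,t,g)` with
`Zσᵢ = rᵢ`, and `Y` fresh, the `(g,Λ)`-pseudo-pattern
`g' = g{Z ↦ λb̄. Y(r₁(b̄), r₂(b̄))}` is a `Λ`-generalization of `s` and `t`;
moreover `(σ₁' ∪ {Y ↦ λw₁w₂.w₁}, σ₂' ∪ {Y ↦ λw₁w₂.w₂}) ∈ GS_gnd(s,t,g')`,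
where `σᵢ'` is `σᵢ` with `Z` removed from its domain. -/
theorem pseudo_pattern_is_generalization
    (z Y : ℕ) (δs : List Ty) (args : List Tm) (σ₁ σ₂ : Subst)
    (htight : IsTight ΛAll (tightForm z δs args))
    (hgs : GSgnd (tightForm z δs args) σ₁ σ₂)
    (hYfresh : ∀ τ, occFV Y τ (tightForm z δs args) = 0) :
    Gen ΛAll (pseudoPat z Y δs args
        (σ₁.map z (mkArrow δs Ty.base)) (σ₂.map z (mkArrow δs Ty.base))) ∧
    GSgnd (pseudoPat z Y δs args
        (σ₁.map z (mkArrow δs Ty.base)) (σ₂.map z (mkArrow δs Ty.base)))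
      ((σ₁.update z (mkArrow δs Ty.base)
          (Tm.fvar z (mkArrow δs Ty.base)) HasType.fvar).update Y ty2 proj1 proj1_wt)
      ((σ₂.update z (mkArrow δs Ty.base)
          (Tm.fvar z (mkArrow δs Ty.base)) HasType.fvar).update Y ty2 proj2 proj2_wt) := by
  set τz : Ty := mkArrow δs Ty.base with hτzdef
  set r₁ : Tm := σ₁.map z τz with hr₁def
  set r₂ : Tm := σ₂.map z τz with hr₂def
  set θ₁ : Subst := (σ₁.update z τz (Tm.fvar z τz) HasType.fvar).update Y ty2 proj1 proj1_wt
    with hθ₁def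
  set θ₂ : Subst := (σ₂.update z τz (Tm.fvar z τz) HasType.fvar).update Y ty2 proj2 proj2_wt
    with hθ₂def
  set B : Tm := pseudoBody Y δs r₁ r₂ with hBdef
  -- z ≠ Y
  have hzY : z ≠ Y := by
    intro h
    have h0 : occFV Y τz (tightForm z δs args) = 0 := hYfresh τz
    have h1 : occFV Y τz (appList (Tm.fvar z τz) args) = 0 := by
      simpa [tightForm, occFV, fC] using h0
    have h2 := occFV_appList_head args (Tm.fvar z τz) h1
    rw [h] at h2
    simp [occFV] at h2
  -- Y does not occur (at type ty2) in the body of g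
  have hoccY : occFV Y ty2 (appList (Tm.fvar z τz) args) = 0 := by
    simpa [tightForm, occFV, fC] using hYfresh ty2
  -- computations of the maps θᵢ
  have hθY1 : θ₁.map Y ty2 = proj1 := by
    simp [hθ₁def, Subst.update]
  have hθY2 : θ₂.map Y ty2 = proj2 := by
    simp [hθ₂def, Subst.update]
  have hθz1 : θ₁.map z τz = Tm.fvar z τz := by
    simp only [hθ₁def, Subst.update]
    rw [if_neg (fun hc => hzY hc.1)]
    simp
  have hθz2 : θ₂.map z τz = Tm.fvar z τz := by
    simp only [hθ₂def, Subst.update]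
    rw [if_neg (fun hc => hzY hc.1)]
    simp
  have hag1 : ∀ m ρ, ¬ (m = z ∧ ρ = τz) → ¬ (m = Y ∧ ρ = ty2) → θ₁.map m ρ = σ₁.map m ρ := by
    intro m ρ h1 h2
    simp only [hθ₁def, Subst.update]
    rw [if_neg h2, if_neg h1]
  have hag2 : ∀ m ρ, ¬ (m = z ∧ ρ = τz) → ¬ (m = Y ∧ ρ = ty2) → θ₂.map m ρ = σ₂.map m ρ := by
    intro m ρ h1 h2
    simp only [hθ₂def, Subst.update]
    rw [if_neg h2, if_neg h1]
  -- shift does nothing to the closed terms rⱼ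
  have hshift1 : shift δs.length 0 r₁ = r₁ :=
    shift_closed (σ₁.wt z τz) δs.length 0 (Nat.le_refl 0)
  have hshift2 : shift δs.length 0 r₂ = r₂ :=
    shift_closed (σ₂.wt z τz) δs.length 0 (Nat.le_refl 0)
  -- applying θᵢ to rⱼ does nothing
  have happ : ∀ (θ : Subst), θ.map z τz = Tm.fvar z τz →
      ∀ (σ : Subst), σ.Ground → applyMap θ.map (σ.map z τz) = σ.map z τz := by
    intro θ hθ σ hσ
    by_cases hr : σ.map z τz = Tm.fvar z τz
    · rw [hr]; simpa [applyMap] using hθ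
    · exact noFV_applyMap _ _ (hσ z τz hr)
  have happ11 : applyMap θ₁.map r₁ = r₁ := happ θ₁ hθz1 σ₁ hgs.2.2.1
  have happ12 : applyMap θ₁.map r₂ = r₂ := happ θ₁ hθz1 σ₂ hgs.2.2.2
  have happ21 : applyMap θ₂.map r₁ = r₁ := happ θ₂ hθz2 σ₁ hgs.2.2.1
  have happ22 : applyMap θ₂.map r₂ = r₂ := happ θ₂ hθz2 σ₂ hgs.2.2.2
  -- θᵢ applied to the pseudo-body B is αβη-equal to rᵢ
  have hmapB1 : applyMap θ₁.map B =
      mkLams δs (Tm.app (Tm.app proj1 (appBVars r₁ δs.length)) (appBVars r₂ δs.length)) := by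
    simp only [hBdef, pseudoBody, applyMap_mkLams, applyMap, applyMap_appBVars,
      hshift1, hshift2, happ11, happ12, hθY1]
  have hmapB2 : applyMap θ₂.map B =
      mkLams δs (Tm.app (Tm.app proj2 (appBVars r₁ δs.length)) (appBVars r₂ δs.length)) := by
    simp only [hBdef, pseudoBody, applyMap_mkLams, applyMap, applyMap_appBVars,
      hshift1, hshift2, happ21, happ22, hθY2]
  have hB1 : AbeEq (applyMap θ₁.map B) r₁ := by
    rw [hmapB1]
    refine AbeEq.trans (abeEq_mkLams (proj1_beta _ _) δs) ?_
    have := etaMulti δs r₁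
    rwa [hshift1] at this
  have hB2 : AbeEq (applyMap θ₂.map B) r₂ := by
    rw [hmapB2]
    refine AbeEq.trans (abeEq_mkLams (proj2_beta _ _) δs) ?_
    have := etaMulti δs r₂
    rwa [hshift2] at this
  -- the key αβη equalities
  have hk1 := key_subst θ₁.map σ₁.map z Y τz B hB1 hag1 (appList (Tm.fvar z τz) args) hoccY
  have hk2 := key_subst θ₂.map σ₂.map z Y τz B hB2 hag2 (appList (Tm.fvar z τz) args) hoccY
  have habe1 : AbeEq (θ₁.apply (pseudoPat z Y δs args r₁ r₂)) (σ₁.apply (tightForm z δs args)) := by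
    show AbeEq (applyMap _ _) (applyMap _ _)
    simp only [pseudoPat, tightForm, fC, pseudoArg, applyMap]
    exact AbeEq.lam (AbeEq.lam (AbeEq.app (AbeEq.refl _) hk1))
  have habe2 : AbeEq (θ₂.apply (pseudoPat z Y δs args r₁ r₂)) (σ₂.apply (tightForm z δs args)) := by
    show AbeEq (applyMap _ _) (applyMap _ _)
    simp only [pseudoPat, tightForm, fC, pseudoArg, applyMap]
    exact AbeEq.lam (AbeEq.lam (AbeEq.app (AbeEq.refl _) hk2))
  have h1 : AbeEq (θ₁.apply (pseudoPat z Y δs args r₁ r₂)) sTerm :=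
    AbeEq.trans habe1 hgs.1
  have h2 : AbeEq (θ₂.apply (pseudoPat z Y δs args r₁ r₂)) tTerm :=
    AbeEq.trans habe2 hgs.2.1
  -- typing of the pseudo-pattern
  have hg0 : HasType [] (Tm.lam Ty.base (Tm.lam Ty.base
      (Tm.app (Tm.const 0 (Ty.arr Ty.base Ty.base)) (appList (Tm.fvar z τz) args))))
      (Ty.arr Ty.base (Ty.arr Ty.base Ty.base)) := htight.1.1.2.1
  have hX : HasType [Ty.base, Ty.base] (appList (Tm.fvar z τz) args) Ty.base := by
    cases hg0 with
    | lam hg1 =>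
      cases hg1 with
      | lam hg2 =>
        cases hg2 with
        | app hf hX =>
          cases hf with
          | const => exact hX
  have hBwt : HasType [] B τz := by
    rw [hBdef, pseudoBody, hshift1, hshift2]
    apply mkLams_wt (Γ := [])
    have ha1 : HasType (δs.reverse ++ []) (appBVars r₁ δs.length) Ty.base :=
      appBVars_wt (Δ := []) (weaken0 (σ₁.wt z τz) _)
    have ha2 : HasType (δs.reverse ++ []) (appBVars r₂ δs.length) Ty.base :=
      appBVars_wt (Δ := []) (weaken0 (σ₂.wt z τz) _)
    exact HasType.app (HasType.app HasType.fvar ha1) ha2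
  have hty' : HasType [] (pseudoPat z Y δs args r₁ r₂) ty2 := by
    refine HasType.lam (HasType.lam (HasType.app (HasType.const (τ := tyFF)) ?_))
    exact subst1_wt hX hBwt
  -- groundness
  have hgr1 : θ₁.Ground := ground_update σ₁ hgs.2.2.1 z Y τz proj1 proj1_wt trivial
  have hgr2 : θ₂.Ground := ground_update σ₂ hgs.2.2.2 z Y τz proj2 proj2_wt trivial
  exact ⟨⟨trivial, hty', θ₁, θ₂, h1, h2⟩, h1, h2, hgr1, hgr2⟩

end AU
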